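/- Fix an efficiency η with 0 < η ≤ 1 and a marginal discharge cost c ≥ 0. Let v1 ≤ v2 ≤ v3 and v1' ≤ v2' ≤ v3' be real numbers with v1 ≤ v1', v2 ≤ v2', and v3 ≤ v3', and let g and g' be the piecewise marginal-value maps (defined in the context) associated with (v1, v2, v3) and (v1', v2', v3') respectively. Then g(λ) ≤ g'(λ) for every λ ∈ ℝ. -/

import Mathlib

/-!
Below the discharge threshold `max (v2 / η + c) 0` the map is `p / η` clamped to `[v1, v2]`,
above it `η * (p - c)` clamped to `[v2, v3]`. Clamps are monotone in their bounds and the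
threshold grows with `v2`, so only prices between the old and the new threshold need an argument:
there the old value is at most `max v2 (η * (p - c))`, and both `v2` and `η * (p - c)` lie below
`p / η` and below `v2'`.
-/

/-- The piecewise marginal-value map `g` from Theorem 1: the marginal value
`q_{t−1}(e)` of stored energy given a price realization, where `v1, v2, v3` are the
next-period marginal values at the full-charge, idle, and full-discharge ending SoC. -/
noncomputable def marginalValue (v1 v2 v3 η c : ℝ) (p : ℝ) : ℝ :=
  if p < v1 * η then v1
  else if p < v2 * η then p / η
  else if p < max (v2 / η + c) 0 then v2
  else if p < max (v3 / η + c) 0 then η * (p - c)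
  else v3

variable {η c p : ℝ}

lemma div_add_le_iff_le_mul_sub (hη : 0 < η) (v : ℝ) : v / η + c ≤ p ↔ v ≤ η * (p - c) := by
  rw [← le_sub_iff_add_le, div_le_iff₀ hη, mul_comm]

lemma mul_le_max_div_add_zero (hη0 : 0 < η) (hη1 : η ≤ 1) (hc : 0 ≤ c) (v : ℝ) :
    v * η ≤ max (v / η + c) 0 := by
  rcases le_or_gt 0 v with hv | hv
  · calc v * η ≤ v := mul_le_of_le_one_right hv hη1
      _ ≤ v / η := le_div_self hv hη0 hη1
      _ ≤ v / η + c := le_add_of_nonneg_right hc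
      _ ≤ max (v / η + c) 0 := le_max_left _ _
  · exact (mul_neg_of_neg_of_pos hv hη0).le.trans (le_max_right _ _)

lemma mul_sub_le_div (hη0 : 0 < η) (hη1 : η ≤ 1) (hc : 0 ≤ c) (hp : 0 ≤ p) :
    η * (p - c) ≤ p / η :=
  calc η * (p - c) ≤ η * p := by gcongr; linarith
    _ ≤ p := mul_le_of_le_one_left hp hη1
    _ ≤ p / η := le_div_self hp hη0 hη1

variable {v1 v2 v3 : ℝ}

lemma marginalValue_of_lt (hη : 0 < η) (h12 : v1 ≤ v2) (hp : p < max (v2 / η + c) 0) :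
    marginalValue v1 v2 v3 η c p = max v1 (min (p / η) v2) := by
  unfold marginalValue
  split_ifs with h1 h2
  · have : p / η < v1 := (div_lt_iff₀ hη).2 h1
    rw [min_eq_left (by linarith), max_eq_left this.le]
  · have : v1 ≤ p / η := (le_div_iff₀ hη).2 (not_lt.1 h1)
    rw [min_eq_left ((div_lt_iff₀ hη).2 h2).le, max_eq_right this]
  · rw [min_eq_right ((le_div_iff₀ hη).2 (not_lt.1 h2)), max_eq_right h12]

lemma marginalValue_of_le (hη0 : 0 < η) (hη1 : η ≤ 1) (hc : 0 ≤ c) (h12 : v1 ≤ v2)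
    (h23 : v2 ≤ v3) (hp : max (v2 / η + c) 0 ≤ p) :
    marginalValue v1 v2 v3 η c p = max v2 (min (η * (p - c)) v3) := by
  have hv2 : v2 ≤ η * (p - c) := (div_add_le_iff_le_mul_sub hη0 v2).1 (le_of_max_le_left hp)
  have hv2p : v2 * η ≤ p := (mul_le_max_div_add_zero hη0 hη1 hc v2).trans hp
  have hv1p : v1 * η ≤ p := (mul_le_mul_of_nonneg_right h12 hη0.le).trans hv2p
  unfold marginalValue
  rw [if_neg hv1p.not_gt, if_neg hv2p.not_gt, if_neg hp.not_gt]
  split_ifs with h3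
  · have hp3 : p < v3 / η + c := by
      simpa [(le_of_max_le_right hp).not_gt] using h3
    have : η * (p - c) < v3 :=
      lt_of_not_ge fun h ↦ hp3.not_ge ((div_add_le_iff_le_mul_sub hη0 v3).2 h)
    rw [min_eq_left this.le, max_eq_right hv2]
  · have : v3 ≤ η * (p - c) :=
      (div_add_le_iff_le_mul_sub hη0 v3).1 (le_of_max_le_left (not_lt.1 h3))
    rw [min_eq_right this, max_eq_right h23]

lemma max_min_mul_sub_le_max_min_div (hη0 : 0 < η) (hη1 : η ≤ 1) (hc : 0 ≤ c)
    {v1' v2' : ℝ} (h2 : v2 ≤ v2') (hp : max (v2 / η + c) 0 ≤ p)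
    (hp' : p < max (v2' / η + c) 0) :
    max v2 (min (η * (p - c)) v3) ≤ max v1' (min (p / η) v2') := by
  have hp0 : 0 ≤ p := le_of_max_le_right hp
  have hv2 : v2 ≤ p / η :=
    (le_div_iff₀ hη0).2 ((mul_le_max_div_add_zero hη0 hη1 hc v2).trans hp)
  have hv2' : η * (p - c) ≤ v2' := by
    have : p < v2' / η + c := by simpa [hp0.not_gt] using hp'
    exact le_of_not_ge fun h ↦
      this.not_ge ((div_add_le_iff_le_mul_sub hη0 v2').2 h)
  calc max v2 (min (η * (p - c)) v3)
      ≤ max v2 (η * (p - c)) := max_le_max_left _ (min_le_left _ _)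
    _ ≤ min (p / η) v2' :=
        max_le (le_min hv2 h2) (le_min (mul_sub_le_div hη0 hη1 hc hp0) hv2')
    _ ≤ max v1' (min (p / η) v2') := le_max_right _ _

/-- Pointwise monotonicity of the marginal-value map in `(v1, v2, v3)`:
larger next-period marginal values yield a pointwise larger map. -/
theorem marginalValue_mono_in_values
    (η c : ℝ) (hη0 : 0 < η) (hη1 : η ≤ 1) (hc : 0 ≤ c)
    (v1 v2 v3 v1' v2' v3' : ℝ)
    (h12 : v1 ≤ v2) (h23 : v2 ≤ v3)
    (h12' : v1' ≤ v2') (h23' : v2' ≤ v3')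
    (h1 : v1 ≤ v1') (h2 : v2 ≤ v2') (h3 : v3 ≤ v3') :
    ∀ p : ℝ, marginalValue v1 v2 v3 η c p ≤ marginalValue v1' v2' v3' η c p := by
  intro p
  rcases lt_or_ge p (max (v2 / η + c) 0) with hp | hp
  · have hp' : p < max (v2' / η + c) 0 := hp.trans_le (by gcongr)
    rw [marginalValue_of_lt hη0 h12 hp, marginalValue_of_lt hη0 h12' hp']
    exact max_le_max h1 (min_le_min_left _ h2)
  rw [marginalValue_of_le hη0 hη1 hc h12 h23 hp]
  rcases lt_or_ge p (max (v2' / η + c) 0) with hp' | hp'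
  · rw [marginalValue_of_lt hη0 h12' hp']
    exact max_min_mul_sub_le_max_min_div hη0 hη1 hc h2 hp hp'
  · rw [marginalValue_of_le hη0 hη1 hc h12' h23' hp']
    exact max_le_max h2 (min_le_min_left _ h3)
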